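/- The 24-cell equals the intersection of the half-spaces determined by its 24 facet hyperplanes: convexHull ℝ V = { x ∈ EuclideanSpace ℝ (Fin 4) : (∀ i, |x i| ≤ 1) ∧ (∀ ε : Fin 4 → ℝ, (∀ i, ε i = 1 ∨ ε i = -1) → ∑ i, ε i * x i ≤ 2) }. -/
import Mathlib


open scoped RealInnerProductSpace

/-- The `i`-th standard basis vector of `EuclideanSpace ℝ (Fin 4)`. -/
noncomputable def stdV (i : Fin 4) : EuclideanSpace ℝ (Fin 4) :=
  EuclideanSpace.single i (1 : ℝ)

/-- The 24 vertices of the 24-cell: all permutations of the coordinates of `(±1, ±1, 0, 0)`. -/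
def cellV : Set (EuclideanSpace ℝ (Fin 4)) :=
  {x | ∃ i j : Fin 4, i ≠ j ∧ ∃ ε δ : ℝ, (ε = 1 ∨ ε = -1) ∧ (δ = 1 ∨ δ = -1) ∧
    x = ε • stdV i + δ • stdV j}

lemma fin4_cover (i0 i1 i2 i3 : Fin 4) (h01 : i0 ≠ i1) (h02 : i0 ≠ i2) (h03 : i0 ≠ i3)
    (h12 : i1 ≠ i2) (h13 : i1 ≠ i3) (h23 : i2 ≠ i3) (l : Fin 4) :
    l = i0 ∨ l = i1 ∨ l = i2 ∨ l = i3 := by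
  revert h01 h02 h03 h12 h13 h23; revert i0 i1 i2 i3 l; decide

lemma basis_expand (i0 i1 i2 i3 : Fin 4) (h01 : i0 ≠ i1) (h02 : i0 ≠ i2) (h03 : i0 ≠ i3)
    (h12 : i1 ≠ i2) (h13 : i1 ≠ i3) (h23 : i2 ≠ i3) (x : EuclideanSpace ℝ (Fin 4)) :
    x = x i0 • stdV i0 + x i1 • stdV i1 + x i2 • stdV i2 + x i3 • stdV i3 := by
  ext l
  rcases fin4_cover i0 i1 i2 i3 h01 h02 h03 h12 h13 h23 l with rfl | rfl | rfl | rfl <;>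
    simp [stdV, EuclideanSpace.single_apply, h01, h02, h03, h12, h13, h23,
      h01.symm, h02.symm, h03.symm, h12.symm, h13.symm, h23.symm]

lemma zero_mem_hull : (0 : EuclideanSpace ℝ (Fin 4)) ∈ convexHull ℝ cellV := by
  have hv : ((1:ℝ) • stdV 0 + (1:ℝ) • stdV 1) ∈ convexHull ℝ cellV :=
    subset_convexHull ℝ _ ⟨0, 1, by decide, 1, 1, Or.inl rfl, Or.inl rfl, rfl⟩
  have hw : ((-1:ℝ) • stdV 0 + (-1:ℝ) • stdV 1) ∈ convexHull ℝ cellV :=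
    subset_convexHull ℝ _ ⟨0, 1, by decide, -1, -1, Or.inr rfl, Or.inr rfl, rfl⟩
  have := (convex_convexHull ℝ cellV) hv hw (by norm_num : (0:ℝ) ≤ 1/2)
    (by norm_num : (0:ℝ) ≤ 1/2) (by norm_num)
  convert this using 1
  module

lemma key (x : EuclideanSpace ℝ (Fin 4)) (i0 i1 i2 i3 : Fin 4)
    (h01 : i0 ≠ i1) (h02 : i0 ≠ i2) (h03 : i0 ≠ i3)
    (h12 : i1 ≠ i2) (h13 : i1 ≠ i3) (h23 : i2 ≠ i3)
    (ha1 : |x i1| ≤ |x i0|) (ha2 : |x i2| ≤ |x i0|)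
    (h31 : |x i3| ≤ |x i1|) (h32 : |x i3| ≤ |x i2|)
    (hb : |x i0| ≤ 1) (hsum : |x i0| + |x i1| + |x i2| + |x i3| ≤ 2) :
    x ∈ convexHull ℝ cellV := by
  have hins : convexHull ℝ (insert (0 : EuclideanSpace ℝ (Fin 4)) cellV) ⊆ convexHull ℝ cellV := by
    apply convexHull_min _ (convex_convexHull ℝ cellV)
    rintro y (rfl | hy)
    · exact zero_mem_hull
    · exact subset_convexHull ℝ _ hy
  apply hins
  set a0 := |x i0| with ha0d
  set a1 := |x i1| with ha1d
  set a2 := |x i2| with ha2d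
  set a3 := |x i3| with ha3d
  obtain ⟨e0, he0, hx0⟩ : ∃ e : ℝ, (e = 1 ∨ e = -1) ∧ x i0 = e * a0 := by
    rcases le_or_gt 0 (x i0) with h | h
    · exact ⟨1, Or.inl rfl, by rw [ha0d, abs_of_nonneg h]; ring⟩
    · exact ⟨-1, Or.inr rfl, by rw [ha0d, abs_of_neg h]; ring⟩
  obtain ⟨e1, he1, hx1⟩ : ∃ e : ℝ, (e = 1 ∨ e = -1) ∧ x i1 = e * a1 := by
    rcases le_or_gt 0 (x i1) with h | h
    · exact ⟨1, Or.inl rfl, by rw [ha1d, abs_of_nonneg h]; ring⟩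
    · exact ⟨-1, Or.inr rfl, by rw [ha1d, abs_of_neg h]; ring⟩
  obtain ⟨e2, he2, hx2⟩ : ∃ e : ℝ, (e = 1 ∨ e = -1) ∧ x i2 = e * a2 := by
    rcases le_or_gt 0 (x i2) with h | h
    · exact ⟨1, Or.inl rfl, by rw [ha2d, abs_of_nonneg h]; ring⟩
    · exact ⟨-1, Or.inr rfl, by rw [ha2d, abs_of_neg h]; ring⟩
  obtain ⟨e3, he3, hx3⟩ : ∃ e : ℝ, (e = 1 ∨ e = -1) ∧ x i3 = e * a3 := by
    rcases le_or_gt 0 (x i3) with h | h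
    · exact ⟨1, Or.inl rfl, by rw [ha3d, abs_of_nonneg h]; ring⟩
    · exact ⟨-1, Or.inr rfl, by rw [ha3d, abs_of_neg h]; ring⟩
  have ha0n : 0 ≤ a0 := abs_nonneg _
  have ha1n : 0 ≤ a1 := abs_nonneg _
  have ha2n : 0 ≤ a2 := abs_nonneg _
  have ha3n : 0 ≤ a3 := abs_nonneg _
  rcases le_or_gt a0 (a1 + a2 + a3) with hc | hc
  · -- case 1 : a0 ≤ a1 + a2 + a3
    set w : Fin 5 → ℝ := ![1 - (a0 + a1 + a2 + a3)/2, (a0 + a1 - a2 - a3)/2,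
      (a0 - a1 + a2 - a3)/2, a3, (a1 + a2 + a3 - a0)/2] with hw
    set z : Fin 5 → EuclideanSpace ℝ (Fin 4) := ![0, e0 • stdV i0 + e1 • stdV i1,
      e0 • stdV i0 + e2 • stdV i2, e0 • stdV i0 + e3 • stdV i3, e1 • stdV i1 + e2 • stdV i2]
      with hz
    have hws : ∑ k, w k = 1 := by simp [hw, Fin.sum_univ_five]; ring
    have hmem := Finset.centerMass_mem_convexHull (Finset.univ : Finset (Fin 5))
      (w := w) ?_ (by rw [hws]; norm_num) (z := z)
      (s := insert (0 : EuclideanSpace ℝ (Fin 4)) cellV) ?_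
    · rw [Finset.centerMass_eq_of_sum_1 _ _ hws] at hmem
      convert hmem using 1
      rw [Fin.sum_univ_five]
      simp only [hw, hz]
      simp only [Matrix.cons_val_zero, Matrix.cons_val_one, Matrix.head_cons,
        Matrix.cons_val_two, Matrix.tail_cons, Matrix.cons_val_three, Matrix.cons_val_four]
      rw [basis_expand i0 i1 i2 i3 h01 h02 h03 h12 h13 h23 x, hx0, hx1, hx2, hx3]
      match_scalars <;> ring
    · intro k _
      fin_cases k <;> simp [hw] <;> linarith
    · intro k _
      fin_cases k
      · exact Set.mem_insert _ _
      · exact Set.mem_insert_of_mem _ ⟨i0, i1, h01, e0, e1, he0, he1, rfl⟩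
      · exact Set.mem_insert_of_mem _ ⟨i0, i2, h02, e0, e2, he0, he2, rfl⟩
      · exact Set.mem_insert_of_mem _ ⟨i0, i3, h03, e0, e3, he0, he3, rfl⟩
      · exact Set.mem_insert_of_mem _ ⟨i1, i2, h12, e1, e2, he1, he2, rfl⟩
  · -- case 2 : a0 > a1 + a2 + a3
    set t := (a0 - a1 - a2 - a3)/2 with ht
    set w : Fin 5 → ℝ := ![1 - a0, a1 + t, t, a2, a3] with hw
    set z : Fin 5 → EuclideanSpace ℝ (Fin 4) := ![0, e0 • stdV i0 + e1 • stdV i1,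
      e0 • stdV i0 + (-e1) • stdV i1, e0 • stdV i0 + e2 • stdV i2, e0 • stdV i0 + e3 • stdV i3]
      with hz
    have hws : ∑ k, w k = 1 := by simp [hw, ht, Fin.sum_univ_five]; ring
    have hmem := Finset.centerMass_mem_convexHull (Finset.univ : Finset (Fin 5))
      (w := w) ?_ (by rw [hws]; norm_num) (z := z)
      (s := insert (0 : EuclideanSpace ℝ (Fin 4)) cellV) ?_
    · rw [Finset.centerMass_eq_of_sum_1 _ _ hws] at hmem
      convert hmem using 1
      rw [Fin.sum_univ_five]
      simp only [hw, hz]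
      simp only [Matrix.cons_val_zero, Matrix.cons_val_one, Matrix.head_cons,
        Matrix.cons_val_two, Matrix.tail_cons, Matrix.cons_val_three, Matrix.cons_val_four]
      rw [basis_expand i0 i1 i2 i3 h01 h02 h03 h12 h13 h23 x, hx0, hx1, hx2, hx3]
      match_scalars <;> ring
    · intro k _
      fin_cases k <;> simp [hw, ht] <;> linarith
    · intro k _
      have he1' : (-e1 = 1 ∨ -e1 = -1) := by rcases he1 with h | h <;> simp [h]
      fin_cases k
      · exact Set.mem_insert _ _
      · exact Set.mem_insert_of_mem _ ⟨i0, i1, h01, e0, e1, he0, he1, rfl⟩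
      · exact Set.mem_insert_of_mem _ ⟨i0, i1, h01, e0, -e1, he0, he1', rfl⟩
      · exact Set.mem_insert_of_mem _ ⟨i0, i2, h02, e0, e2, he0, he2, rfl⟩
      · exact Set.mem_insert_of_mem _ ⟨i0, i3, h03, e0, e3, he0, he3, rfl⟩

lemma fin4_compl (i0 : Fin 4) : ∃ j k l : Fin 4, i0 ≠ j ∧ i0 ≠ k ∧ i0 ≠ l ∧
    j ≠ k ∧ j ≠ l ∧ k ≠ l := by revert i0; decide

/-- The 24-cell is the intersection of the half-spaces determined by its 24 facet hyperplanes. -/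
theorem cell24_eq_halfspaces :
    convexHull ℝ cellV =
      {x : EuclideanSpace ℝ (Fin 4) | (∀ i, |x i| ≤ 1) ∧
        ∀ ε : Fin 4 → ℝ, (∀ i, ε i = 1 ∨ ε i = -1) → ∑ i, ε i * x i ≤ 2} := by
  apply le_antisymm
  · -- hull ⊆ halfspaces
    apply convexHull_min
    · rintro y ⟨i, j, hij, ε, δ, hε, hδ, rfl⟩
      constructor
      · intro k
        have hc : ((ε • stdV i + δ • stdV j : EuclideanSpace ℝ (Fin 4)) : Fin 4 → ℝ) k
            = ε * (if k = i then 1 else 0) + δ * (if k = j then 1 else 0) := by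
          simp [stdV, EuclideanSpace.single_apply]
        rw [hc]
        by_cases hki : k = i <;> by_cases hkj : k = j
        · exact absurd (hki.symm.trans hkj) hij
        all_goals simp [hki, hkj, hij, Ne.symm hij] <;>
          rcases hε with rfl | rfl <;> rcases hδ with rfl | rfl <;> norm_num
      · intro ε' hε'
        have heq : ∀ k, ε' k * ((ε • stdV i + δ • stdV j : EuclideanSpace ℝ (Fin 4)) k)
            = (if k = i then ε' k * ε else 0) + (if k = j then ε' k * δ else 0) := by
          intro k
          by_cases hki : k = i <;> by_cases hkj : k = j
          · exact absurd (hki.symm.trans hkj) hij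
          all_goals simp [stdV, EuclideanSpace.single_apply, hki, hkj, hij, Ne.symm hij]
        calc ∑ k, ε' k * ((ε • stdV i + δ • stdV j : EuclideanSpace ℝ (Fin 4)) k)
            = ∑ k, ((if k = i then ε' k * ε else 0) + (if k = j then ε' k * δ else 0)) :=
              Finset.sum_congr rfl fun k _ => heq k
          _ = ε' i * ε + ε' j * δ := by
              rw [Finset.sum_add_distrib, Finset.sum_ite_eq' Finset.univ i fun k => ε' k * ε,
                Finset.sum_ite_eq' Finset.univ j fun k => ε' k * δ]
              simp
          _ ≤ 2 := by
              rcases hε' i with h1 | h1 <;> rcases hε' j with h2 | h2 <;>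
                rcases hε with rfl | rfl <;> rcases hδ with rfl | rfl <;> rw [h1, h2] <;> norm_num
    · intro p hp q hq a b ha hb hab
      constructor
      · intro k
        have hco : ((a • p + b • q : EuclideanSpace ℝ (Fin 4)) : Fin 4 → ℝ) k
            = a * p k + b * q k := by simp
        rw [hco]
        calc |a * p k + b * q k| ≤ |a * p k| + |b * q k| := abs_add_le _ _
          _ = a * |p k| + b * |q k| := by
              rw [abs_mul, abs_mul, abs_of_nonneg ha, abs_of_nonneg hb]
          _ ≤ a * 1 + b * 1 := by gcongr <;> first | exact hp.1 k | exact hq.1 k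
          _ = 1 := by rw [mul_one, mul_one, hab]
      · intro ε' hε'
        have hsplit : ∑ k, ε' k * ((a • p + b • q : EuclideanSpace ℝ (Fin 4)) k)
            = a * (∑ k, ε' k * p k) + b * (∑ k, ε' k * q k) := by
          rw [Finset.mul_sum, Finset.mul_sum, ← Finset.sum_add_distrib]
          refine Finset.sum_congr rfl fun k _ => ?_
          simp; ring
        rw [hsplit]
        have hp2 := hp.2 ε' hε'
        have hq2 := hq.2 ε' hε'
        nlinarith
  · -- halfspaces ⊆ hull
    rintro x ⟨h1, h2⟩
    have hsum : ∑ k, |x k| ≤ 2 := by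
      have h2' := h2 (fun k => if 0 ≤ x k then 1 else -1)
        (fun k => by by_cases h : 0 ≤ x k <;> simp [h])
      calc ∑ k, |x k| = ∑ k, (if 0 ≤ x k then (1:ℝ) else -1) * x k := by
            refine Finset.sum_congr rfl fun k _ => ?_
            by_cases h : 0 ≤ x k
            · rw [if_pos h, abs_of_nonneg h, one_mul]
            · rw [if_neg h, abs_of_neg (lt_of_not_ge h)]; ring
        _ ≤ 2 := h2'
    obtain ⟨i0, -, hmax⟩ := Finset.exists_max_image Finset.univ (fun k => |x k|)
      ⟨0, Finset.mem_univ 0⟩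
    obtain ⟨j, k, l, hj, hk, hl, hjk, hjl, hkl⟩ := fin4_compl i0
    have huniv : (Finset.univ : Finset (Fin 4)) = {i0, j, k, l} := by
      ext m
      simp only [Finset.mem_univ, true_iff, Finset.mem_insert, Finset.mem_singleton]
      exact fin4_cover i0 j k l hj hk hl hjk hjl hkl m
    have hs4 : |x i0| + |x j| + |x k| + |x l| ≤ 2 := by
      rw [huniv, Finset.sum_insert (by simp [hj, hk, hl]),
        Finset.sum_insert (by simp [hjk, hjl]), Finset.sum_insert (by simp [hkl]),
        Finset.sum_singleton] at hsum
      linarith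
    have hmj := hmax j (Finset.mem_univ j)
    have hmk := hmax k (Finset.mem_univ k)
    have hml := hmax l (Finset.mem_univ l)
    simp only at hmj hmk hml
    have hb : |x i0| ≤ 1 := h1 i0
    rcases le_total (|x j|) (|x k|) with hA | hA
    · rcases le_total (|x j|) (|x l|) with hB | hB
      · -- min is j : (i1,i2,i3) = (k,l,j)
        exact key x i0 k l j hk hl hj hkl hjk.symm hjl.symm hmk hml hA hB hb (by linarith)
      · -- l ≤ j ≤ k : min is l : (i1,i2,i3) = (j,k,l)
        exact key x i0 j k l hj hk hl hjk hjl hkl hmj hmk hB (hB.trans hA) hb (by linarith)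
    · rcases le_total (|x k|) (|x l|) with hB | hB
      · -- min is k : (i1,i2,i3) = (j,l,k)
        exact key x i0 j l k hj hl hk hjl hjk hkl.symm hmj hml hA hB hb (by linarith)
      · -- l ≤ k ≤ j : min is l : (i1,i2,i3) = (j,k,l)
        exact key x i0 j k l hj hk hl hjk hjl hkl hmj hmk (hB.trans hA) hB hb (by linarith)
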